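/- Let C be an ideal of R[z]/(z^n-1) with R = Z4[v]/(v^2) and k = v. Suppose C is generated by four elements f1 = f11 + 2f12 + k f13 + 2k f14, f2 = 2f22 + k f23 + 2k f24, f3 = k f33 + 2k f34, f4 = 2k f44 (with fij polynomials with {0,1}-coefficients, f33 ≠ 0, f44 ≠ 0). Then 2k·f23 ∈ C, and hence f44 divides f23 in Z2[z]/(z^n-1) when f44 generates Tor(Tor(C)). -/

import Mathlib

open Polynomial

/-- The ring `R = Z₄[v]/(v²)`. -/
abbrev Rv : Type := Polynomial (ZMod 4) ⧸ Ideal.span {(X : Polynomial (ZMod 4)) ^ 2}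

noncomputable instance instCommRingRv : CommRing Rv := Ideal.Quotient.commRing _

/-- The image of `v` in `R`. -/
noncomputable def vR : Rv := Ideal.Quotient.mk _ X

/-- The embedding `Z₄ → R`. -/
noncomputable def ι4R : ZMod 4 →+* Rv :=
  (Ideal.Quotient.mk (Ideal.span {(X : Polynomial (ZMod 4)) ^ 2})).comp Polynomial.C

/-- `R[z]/(zⁿ - 1)`. -/
abbrev Rz (n : ℕ) : Type := Polynomial Rv ⧸ Ideal.span {(X : Polynomial Rv) ^ n - 1}

/-- `Z₂[z]/(zⁿ - 1)`. -/
abbrev Z2z (n : ℕ) : Type :=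
  Polynomial (ZMod 2) ⧸ Ideal.span {(X : Polynomial (ZMod 2)) ^ n - 1}

/-- Projection `R[z] → R[z]/(zⁿ - 1)`. -/
noncomputable def πR (n : ℕ) : Polynomial Rv →+* Rz n := Ideal.Quotient.mk _

/-- Projection `Z₂[z] → Z₂[z]/(zⁿ - 1)`. -/
noncomputable def π2 (n : ℕ) : Polynomial (ZMod 2) →+* Z2z n := Ideal.Quotient.mk _

/-- The image of `v` in `R[z]/(zⁿ - 1)` (here `k = v`). -/
noncomputable def vz (n : ℕ) : Rz n := πR n (Polynomial.C vR)

/-- Lift of a polynomial over `Z₄` to `R[z]/(zⁿ - 1)`. -/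
noncomputable def L4 (n : ℕ) (A : Polynomial (ZMod 4)) : Rz n := πR n (A.map ι4R)

/-- Reduction `Z₄ → Z₂`. -/
noncomputable def r42 : ZMod 4 →+* ZMod 2 := ZMod.castHom (show 2 ∣ 4 by norm_num) (ZMod 2)

/-- `Tor(Tor(C)) = {a ∈ Z₂[z]/(zⁿ-1) : 2k·a ∈ C}`. -/
noncomputable def TT (n : ℕ) (I : Ideal (Rz n)) : Set (Z2z n) :=
  {a | ∃ A : Polynomial (ZMod 4),
    π2 n (A.map r42) = a ∧ 2 * vz n * L4 n A ∈ I}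

theorem four_eq_zero_of_ringHom {S : Type*} [NonAssocSemiring S] (φ : ZMod 4 →+* S) :
    (4 : S) = 0 := by
  rw [← map_ofNat φ 4, show (4 : ZMod 4) = 0 by decide, map_zero]

theorem Ideal.two_mul_mul_mem_of_four_eq_zero {S : Type*} [CommRing S] (h4 : (4 : S) = 0)
    {I : Ideal S} {a b c v : S} (h : 2 * a + v * b + 2 * v * c ∈ I) : 2 * v * b ∈ I := by
  have hdouble : 2 * v * b = 2 * (2 * a + v * b + 2 * v * c) := by
    linear_combination (-a - v * c) * h4
  rw [hdouble]
  exact I.mul_mem_left 2 h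

theorem stmt14 (n : ℕ) (I : Ideal (Rz n))
    (f11 f12 f13 f14 f22 f23 f24 f33 f34 f44 : Polynomial (ZMod 4))
    (hI : I = Ideal.span
      {L4 n f11 + 2 * L4 n f12 + vz n * L4 n f13 + 2 * vz n * L4 n f14,
       2 * L4 n f22 + vz n * L4 n f23 + 2 * vz n * L4 n f24,
       vz n * L4 n f33 + 2 * vz n * L4 n f34,
       2 * vz n * L4 n f44})
    (hgen : ((Ideal.span {π2 n (f44.map r42)} : Ideal (Z2z n)) : Set (Z2z n)) = TT n I) :
    2 * vz n * L4 n f23 ∈ I ∧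
    π2 n (f23.map r42) ∈ Ideal.span {π2 n (f44.map r42)} := by
  have hf2 : 2 * L4 n f22 + vz n * L4 n f23 + 2 * vz n * L4 n f24 ∈ I := by
    rw [hI]
    exact Ideal.subset_span (by simp)
  have h4 : (4 : Rz n) = 0 := four_eq_zero_of_ringHom ((πR n).comp (C.comp ι4R))
  have hmem : 2 * vz n * L4 n f23 ∈ I :=
    Ideal.two_mul_mul_mem_of_four_eq_zero (a := L4 n f22) (c := L4 n f24) h4 hf2
  refine ⟨hmem, ?_⟩
  rw [← SetLike.mem_coe, hgen]
  exact ⟨f23, rfl, hmem⟩
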